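/- With A the matrix indexed by subsets of [n-1] defined by A_{ST} = #{w ∈ S_n : [n-1]\S ⊆ C(w) and T ⊆ D(w)}, D the diagonal matrix with D_{SS} = η([n-1]\S), and M the subset-containment matrix (M_{ST} = 1 iff T ⊆ S), we have A = D M D^{-1} as matrices over ℚ. -/

import Mathlib

open Finset

/-- The connectivity set of a word `w` of length `n+1` (0-based indices in `[n-1]` ≅ `Fin n`):
`i ∈ C(w)` iff `w j < w k` whenever `j ≤ i < k`. -/
def Cset {n : ℕ} {α : Type*} [LinearOrder α] (w : Fin (n+1) → α) : Finset (Fin n) :=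
  Finset.univ.filter (fun i => ∀ j k : Fin (n+1), (j : ℕ) ≤ (i : ℕ) → (i : ℕ) < (k : ℕ) → w j < w k)

/-- The descent set of a permutation of `[n]` (modelled on `Fin (n+1)`, 0-based). -/
def Dset {n : ℕ} (w : Equiv.Perm (Fin (n+1))) : Finset (Fin n) :=
  Finset.univ.filter (fun i => w i.succ < w i.castSucc)

/-- The list of gaps `i₁, i₂-i₁, …, n - i_k` determined by `S = {i₁ < … < i_k} ⊆ [n-1]`
(here the ambient set is `[n]` with `n+1` replaced appropriately: sets live in `Fin n`,
permutations act on `n+1` points). -/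
def gaps {n : ℕ} (S : Finset (Fin n)) : List ℕ :=
  let l := (S.sort (· ≤ ·)).map (fun i => (i : ℕ) + 1)
  List.zipWith (fun a b => b - a) (0 :: l) (l ++ [n+1])

/-- `η(S) = i₁!(i₂-i₁)!⋯(n-i_k)!`. -/
def eta {n : ℕ} (S : Finset (Fin n)) : ℕ := ((gaps S).map Nat.factorial).prod

/-- The number of inversions of a permutation. -/
def invNum {m : ℕ} (w : Equiv.Perm (Fin m)) : ℕ :=
  (Finset.univ.filter (fun p : Fin m × Fin m => p.1 < p.2 ∧ w p.2 < w p.1)).card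

/-- `z(T)`: sum of binomial coefficients `C(gap, 2)` over the gaps of the complement of `T`. -/
def zstat {n : ℕ} (T : Finset (Fin n)) : ℕ := ((gaps Tᶜ).map (fun a => a.choose 2)).sum

/-- The `q`-factorial `[j]!_q` in `ℤ[q]`. -/
noncomputable def qFact (j : ℕ) : Polynomial ℤ :=
  ∏ a ∈ Finset.range j, ∑ b ∈ Finset.range (a+1), Polynomial.X ^ b

/-- `η(S, q)`, the `q`-analogue of `η(S)`. -/
noncomputable def etaq {n : ℕ} (S : Finset (Fin n)) : Polynomial ℤ := ((gaps S).map qFact).prod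

/-!
For `T ⊆ S`, the permutations `w` with `Sᶜ ⊆ C(w)` are exactly those that preserve the blocks
cut out by `Sᶜ`: they form a Young subgroup `G` of order `η(Sᶜ)`. The condition `T ⊆ D(w)` says
that `w` is decreasing on every block cut out by the finer set `Tᶜ`, and every left coset of the
Young subgroup `H ≤ G` of `Tᶜ` contains exactly one such `w` (sort the values within each block),
so there are `η(Sᶜ) / η(Tᶜ)` of them. For `T ⊄ S` there are none, since `C(w)` and `D(w)` are
disjoint. Hence `A_{ST} = η(Sᶜ) [T ⊆ S] / η(Tᶜ)`.
-/

lemma Equiv.Perm.apply_mem_iff_of_mapsTo {α : Type*} [Finite α] (σ : Equiv.Perm α) {s : Set α}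
    (h : Set.MapsTo σ s s) (x : α) : σ x ∈ s ↔ x ∈ s :=
  h.mem_iff <| ((s.toFinite.injOn_iff_bijOn_of_mapsTo h).1 σ.injective.injOn).surjOn.mapsTo_compl
    σ.injective

lemma Fin.card_filter_le_val_lt {N a b : ℕ} (hb : b ≤ N) :
    #{j : Fin N | a ≤ ↑j ∧ ↑j < b} = b - a := by
  rw [← Nat.card_Ico, ← card_map Fin.valEmbedding]
  congr 1
  ext x
  simp only [mem_map, mem_filter, mem_univ, true_and, Fin.valEmbedding_apply, mem_Ico]
  exact ⟨fun ⟨j, hj, hjx⟩ => hjx ▸ hj, fun hx => ⟨⟨x, by omega⟩, hx, rfl⟩⟩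

section blockSort

variable {m : ℕ} {β γ : Type*} {f : Fin m → β}

/-- Sorting by this key sorts `u` decreasingly inside each fibre of `f`. -/
def blockKey (f : Fin m → β) (u : Fin m → γ) (j : Fin m) : β ×ₗ γᵒᵈ :=
  toLex (f j, OrderDual.toDual (u j))

lemma blockKey_injective {u : Fin m → γ} (hu : Function.Injective u) :
    Function.Injective (blockKey f u) := fun _ _ h =>
  hu (OrderDual.toDual.injective (congrArg Prod.snd (toLex.injective h)))

lemma blockKey_comp {u : Fin m → γ} {σ : Equiv.Perm (Fin m)} (hσ : f ∘ σ = f) :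
    blockKey f u ∘ σ = blockKey f (u ∘ σ) := by
  funext j
  simp [blockKey, ← congrFun hσ j]

variable [LinearOrder β] [LinearOrder γ]

noncomputable def blockSort (f : Fin m → β) (u : Fin m → γ) : Equiv.Perm (Fin m) :=
  Tuple.sort (blockKey f u)

lemma comp_blockSort (hf : Monotone f) (u : Fin m → γ) : f ∘ blockSort f u = f := by
  have hsort : Monotone (f ∘ blockSort f u) := fun _ _ h =>
    Prod.Lex.monotone_fst _ _ (Tuple.monotone_sort (blockKey f u) h)
  simpa using Tuple.unique_monotone (τ := 1) hsort hf

lemma blockSort_eq {u : Fin m → γ} (hu : Function.Injective u) {σ : Equiv.Perm (Fin m)}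
    (hσ : Monotone (blockKey f u ∘ σ)) : blockSort f u = σ :=
  Equiv.ext fun j => blockKey_injective hu
    (congrFun (Tuple.unique_monotone (Tuple.monotone_sort _) hσ) j)

theorem card_stabilizer_eq_mul {g : Fin m → γ} (hf : Monotone f)
    (hfg : ∀ σ : Equiv.Perm (Fin m), f ∘ σ = f → g ∘ σ = g) :
    #{w : Equiv.Perm (Fin m) | g ∘ w = g} =
      #{u : Equiv.Perm (Fin m) | g ∘ u = g ∧ Monotone (blockKey f u)} *
        #{σ : Equiv.Perm (Fin m) | f ∘ σ = f} := by
  -- every left coset `w H` of `H = Stab f` in `Stab g` contains exactly one `u` with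
  -- `blockKey f u` monotone, namely `w * blockSort f w`
  rw [← card_product, eq_comm]
  refine card_nbij' (fun p => p.1 * p.2) (fun w => (w * blockSort f w, (blockSort f w)⁻¹))
    ?_ ?_ ?_ ?_
  · rintro ⟨u, σ⟩ hp
    simp only [coe_product, Set.mem_prod, mem_coe, mem_filter, mem_univ, true_and] at hp ⊢
    rw [Equiv.Perm.coe_mul, ← Function.comp_assoc, hp.1.1, hfg σ hp.2]
  · intro w hw
    have hs := comp_blockSort hf w
    simp only [coe_product, Set.mem_prod, mem_coe, mem_filter, mem_univ, true_and] at hw ⊢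
    refine ⟨⟨?_, ?_⟩, ?_⟩
    · rw [Equiv.Perm.coe_mul, ← Function.comp_assoc, hw, hfg _ hs]
    · rw [Equiv.Perm.coe_mul, ← blockKey_comp hs]
      exact Tuple.monotone_sort _
    · rw [Equiv.Perm.inv_def, Equiv.comp_symm_eq, hs]
  · rintro ⟨u, σ⟩ hp
    simp only [coe_product, Set.mem_prod, mem_coe, mem_filter, mem_univ, true_and] at hp
    have hσ : f ∘ ⇑σ⁻¹ = f := by rw [Equiv.Perm.inv_def, Equiv.comp_symm_eq, hp.2]
    have hsort : blockSort f ⇑(u * σ) = σ⁻¹ := by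
      refine blockSort_eq (u * σ).injective ?_
      rw [blockKey_comp hσ, ← Equiv.Perm.coe_mul, mul_inv_cancel_right]
      exact hp.1.2
    simp only [hsort, mul_inv_cancel_right, inv_inv]
  · intro w _
    exact mul_inv_cancel_right w _

end blockSort

section

variable {n : ℕ}

/-- The index of the block containing position `j`, where a cut `i ∈ K` separates positions `i`
and `i + 1`; the stabilizer of `blockIdx K` is the Young subgroup of `K`. -/
def blockIdx (K : Finset (Fin n)) (j : Fin (n + 1)) : ℕ := #{i ∈ K | i.castSucc < j}

section blockIdx

variable (K : Finset (Fin n))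

lemma blockIdx_mono : Monotone (blockIdx K) := fun _ _ hjk =>
  card_le_card <| monotone_filter_right K fun _ _ hi => hi.trans_le hjk

lemma blockIdx_le_card (j : Fin (n + 1)) : blockIdx K j ≤ #K :=
  card_le_card (filter_subset _ _)

lemma blockIdx_succ (i : Fin n) :
    blockIdx K i.succ = blockIdx K i.castSucc + if i ∈ K then 1 else 0 := by
  simp only [blockIdx, Fin.castSucc_lt_succ_iff, Fin.castSucc_lt_castSucc_iff, le_iff_lt_or_eq,
    filter_or, filter_eq']
  split_ifs
  · rw [union_singleton, card_insert_of_notMem (by simp)]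
  · simp

variable {K}

lemma blockIdx_lt_of_mem {i : Fin n} (hi : i ∈ K) {j k : Fin (n + 1)} (hj : j ≤ i.castSucc)
    (hk : i.castSucc < k) : blockIdx K j < blockIdx K k :=
  calc blockIdx K j ≤ blockIdx K i.castSucc := blockIdx_mono K hj
    _ < blockIdx K i.succ := by simp [blockIdx_succ, hi]
    _ ≤ blockIdx K k := blockIdx_mono K (Fin.castSucc_lt_iff_succ_le.1 hk)

lemma blockIdx_eq_blockIdx_iff {j k : Fin (n + 1)} :
    blockIdx K j = blockIdx K k ↔ ∀ i ∈ K, (i.castSucc < j ↔ i.castSucc < k) := by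
  refine ⟨fun h i hi => ⟨fun hj => ?_, fun hk => ?_⟩, fun h => congrArg card (filter_congr h)⟩
  · by_contra hk
    exact (blockIdx_lt_of_mem hi (not_lt.1 hk) hj).ne' h
  · by_contra hj
    exact (blockIdx_lt_of_mem hi (not_lt.1 hj) hk).ne h

lemma blockIdx_eq_of_subset {L : Finset (Fin n)} (hKL : K ⊆ L) {j k : Fin (n + 1)}
    (h : blockIdx L j = blockIdx L k) : blockIdx K j = blockIdx K k :=
  blockIdx_eq_blockIdx_iff.2 fun i hi => blockIdx_eq_blockIdx_iff.1 h i (hKL hi)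

lemma le_castSucc_iff_blockIdx_le {i : Fin n} (hi : i ∈ K) {j : Fin (n + 1)} :
    j ≤ i.castSucc ↔ blockIdx K j ≤ blockIdx K i.castSucc :=
  ⟨fun h => blockIdx_mono K h,
    fun h => not_lt.1 fun hlt => (blockIdx_lt_of_mem hi le_rfl hlt).not_ge h⟩

end blockIdx

lemma mem_Cset_iff (w : Equiv.Perm (Fin (n + 1))) (i : Fin n) :
    i ∈ Cset w ↔ ∀ j, (w j ≤ i.castSucc ↔ j ≤ i.castSucc) := by
  simp only [Cset, mem_filter, mem_univ, true_and, ← Fin.val_castSucc i, ← Fin.le_def,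
    ← Fin.lt_def]
  refine ⟨fun h => w.apply_mem_iff_of_mapsTo (s := Set.Iic i.castSucc) fun j hj => ?_,
    fun h j k hj hk => ?_⟩
  · -- otherwise `w` would map `(i, n]` into, hence onto, itself, leaving no room for `w j`
    by_contra hwj
    have hcompl : Set.MapsTo w (Set.Iic i.castSucc)ᶜ (Set.Iic i.castSucc)ᶜ := fun k hk =>
      fun hwk => hwj ((h j k hj (not_le.1 hk)).le.trans hwk)
    exact (w.apply_mem_iff_of_mapsTo hcompl j).1 hwj hj
  · exact ((h j).2 hj).trans_lt (not_le.1 fun hwk => (not_le.2 hk) ((h k).1 hwk))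

lemma subset_Cset_iff (K : Finset (Fin n)) (w : Equiv.Perm (Fin (n + 1))) :
    K ⊆ Cset w ↔ blockIdx K ∘ w = blockIdx K := by
  refine ⟨fun h => funext fun j => blockIdx_eq_blockIdx_iff.2 fun i hi => ?_, fun h i hi => ?_⟩
  · exact not_le.symm.trans (((mem_Cset_iff w i).1 (h hi) j).not.trans not_le)
  · rw [mem_Cset_iff]
    intro j
    rw [le_castSucc_iff_blockIdx_le hi, le_castSucc_iff_blockIdx_le hi]
    exact iff_of_eq (congrArg (· ≤ _) (congrFun h j))

lemma disjoint_Cset_Dset (w : Equiv.Perm (Fin (n + 1))) : Disjoint (Cset w) (Dset w) := by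
  refine disjoint_left.2 fun i hC hD => ?_
  simp only [Cset, Dset, mem_filter, mem_univ, true_and] at hC hD
  exact (hC i.castSucc i.succ le_rfl (by simp)).not_gt hD

lemma monotone_blockKey_blockIdx_iff (K : Finset (Fin n)) (u : Equiv.Perm (Fin (n + 1))) :
    Monotone (blockKey (blockIdx K) u) ↔ Kᶜ ⊆ Dset u := by
  simp only [Fin.monotone_iff_le_succ, blockKey, Prod.Lex.toLex_le_toLex, blockIdx_succ,
    subset_iff, mem_compl, Dset, mem_filter, mem_univ, true_and]
  refine forall_congr' fun i => ?_
  by_cases hi : i ∈ K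
  · simp [hi]
  · simp [hi, le_iff_lt_or_eq, u.injective.eq_iff, Fin.castSucc_lt_succ.ne]

lemma castSucc_orderEmbOfFin_lt_iff (K : Finset (Fin n)) (r : Fin #K) (j : Fin (n + 1)) :
    (K.orderEmbOfFin rfl r).castSucc < j ↔ (r : ℕ) < blockIdx K j := by
  have hK : blockIdx K j = #{r' | (K.orderEmbOfFin rfl r').castSucc < j} := by
    conv_lhs => rw [blockIdx, ← K.map_orderEmbOfFin_univ rfl, filter_map, card_map]
    rfl
  rw [hK]
  exact (Tuple.lt_card_lt_iff_apply_lt_of_monotone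
    (Fin.castSuccOrderEmb.monotone.comp (K.orderEmbOfFin rfl).monotone)).symm

def cuts (K : Finset (Fin n)) : List ℕ := (K.sort (· ≤ ·)).map (fun i : Fin n => (i : ℕ) + 1)

lemma gaps_eq (K : Finset (Fin n)) :
    gaps K = List.zipWith (fun a b => b - a) (0 :: cuts K) (cuts K ++ [n + 1]) := by
  have h : ((K.sort (· ≤ ·)).flatMap fun a : Fin n => [(a : ℕ)]) = (K.sort (· ≤ ·)).map Fin.val :=
    List.flatMap_pure_eq_map Fin.val _
  simp [gaps, cuts, h, Function.comp_def]

lemma length_cuts (K : Finset (Fin n)) : (cuts K).length = #K := by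
  simp [cuts]

lemma cuts_getElem_le_iff (K : Finset (Fin n)) {s : ℕ} (hs : s < (cuts K).length)
    (j : Fin (n + 1)) : (cuts K)[s] ≤ j ↔ s < blockIdx K j := by
  have := castSucc_orderEmbOfFin_lt_iff K ⟨s, length_cuts K ▸ hs⟩ j
  simp only [Finset.orderEmbOfFin_apply, Fin.lt_def, Fin.val_castSucc] at this
  simp [cuts, ← this]

lemma gaps_length (K : Finset (Fin n)) : (gaps K).length = #K + 1 := by
  simp [gaps_eq, length_cuts]

lemma gaps_getElem (K : Finset (Fin n)) {r : ℕ} (hr : r < (gaps K).length) :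
    (gaps K)[r] = #{j : Fin (n + 1) | blockIdx K j = r} := by
  have hr' : r ≤ (cuts K).length := by rw [gaps_length] at hr; rw [length_cuts]; omega
  have hlo : ∀ j : Fin (n + 1), (0 :: cuts K)[r]'(by simp; omega) ≤ j ↔ r ≤ blockIdx K j := by
    intro j
    rcases r with _ | s
    · simp
    · exact cuts_getElem_le_iff K _ j
  have hhi : ∀ j : Fin (n + 1), j < (cuts K ++ [n + 1])[r]'(by simp; omega) ↔ blockIdx K j ≤ r := by
    intro j
    rcases hr'.lt_or_eq with h | rfl
    · rw [List.getElem_append_left h, ← not_le, cuts_getElem_le_iff K h, not_lt]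
    · simp [j.is_lt, length_cuts, blockIdx_le_card]
  have hle : (cuts K ++ [n + 1])[r]'(by simp; omega) ≤ n + 1 := by
    have hmem : ∀ x ∈ cuts K ++ [n + 1], x ≤ n + 1 := by
      simp only [List.mem_append, List.mem_singleton, cuts, List.mem_map]
      rintro x (⟨i, -, rfl⟩ | rfl) <;> omega
    exact hmem _ (List.getElem_mem _)
  simp only [gaps_eq, List.getElem_zipWith]
  rw [← Fin.card_filter_le_val_lt hle]
  congr 1
  ext j
  simp only [mem_filter, mem_univ, true_and, hlo, hhi]
  omega

lemma eta_eq_prod (K : Finset (Fin n)) :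
    eta K = ∏ r ∈ range (#K + 1), (#{j : Fin (n + 1) | blockIdx K j = r}).factorial := by
  rw [← gaps_length, prod_range, eta, ← Fin.prod_univ_fun_getElem]
  exact prod_congr rfl fun r _ => by rw [gaps_getElem]

theorem card_stabilizer_blockIdx (K : Finset (Fin n)) :
    #{σ : Equiv.Perm (Fin (n + 1)) | blockIdx K ∘ σ = blockIdx K} = eta K := by
  rw [← Fintype.card_subtype, DomMulAct.stabilizer_card', eta_eq_prod]
  simp_rw [Fintype.card_subtype]
  refine prod_subset (fun r hr => ?_) fun r _ hr => ?_
  · obtain ⟨j, -, rfl⟩ := mem_image.1 hr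
    exact mem_range.2 (Nat.lt_succ_of_le (blockIdx_le_card K j))
  · rw [filter_eq_empty_iff.2 fun j _ hj => hr (mem_image.2 ⟨j, mem_univ j, hj⟩), card_empty,
      Nat.factorial_zero]

lemma eta_pos (K : Finset (Fin n)) : 0 < eta K := by
  rw [← card_stabilizer_blockIdx]
  exact card_pos.2 ⟨1, by simp⟩

theorem card_compl_subset_Cset_subset_Dset_mul_eta {S T : Finset (Fin n)} (hTS : T ⊆ S) :
    #{w : Equiv.Perm (Fin (n + 1)) | Sᶜ ⊆ Cset w ∧ T ⊆ Dset w} * eta Tᶜ = eta Sᶜ := by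
  have hstab (σ : Equiv.Perm (Fin (n + 1))) (hσ : blockIdx Tᶜ ∘ σ = blockIdx Tᶜ) :
      blockIdx Sᶜ ∘ σ = blockIdx Sᶜ :=
    funext fun j => blockIdx_eq_of_subset (compl_subset_compl.2 hTS) (congrFun hσ j)
  rw [← card_stabilizer_blockIdx, ← card_stabilizer_blockIdx,
    card_stabilizer_eq_mul (blockIdx_mono Tᶜ) hstab]
  congr 2
  ext w
  rw [mem_filter, mem_filter, subset_Cset_iff, monotone_blockKey_blockIdx_iff, compl_compl]

end

/-- `A = D M D⁻¹` over `ℚ`, where `A_{ST}` counts permutations with `[n-1]\S ⊆ C(w)` and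
`T ⊆ D(w)`, `D` is diagonal with entries `η([n-1]\S)`, and `M_{ST} = [T ⊆ S]`. -/
theorem stmt7 (n : ℕ)
    (A : Matrix (Finset (Fin n)) (Finset (Fin n)) ℚ)
    (hA : ∀ S T, A S T = (Finset.univ.filter
        (fun w : Equiv.Perm (Fin (n+1)) => Sᶜ ⊆ Cset ⇑w ∧ T ⊆ Dset w)).card)
    (M : Matrix (Finset (Fin n)) (Finset (Fin n)) ℚ)
    (hM : ∀ S T, M S T = if T ⊆ S then 1 else 0)
    (D : Matrix (Finset (Fin n)) (Finset (Fin n)) ℚ)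
    (hD : D = Matrix.diagonal (fun S => (eta Sᶜ : ℚ)))
    (Dinv : Matrix (Finset (Fin n)) (Finset (Fin n)) ℚ)
    (hDinv : Dinv = Matrix.diagonal (fun S => ((eta Sᶜ : ℚ))⁻¹)) :
    A = D * M * Dinv := by
  subst hD hDinv
  ext S T
  rw [Matrix.mul_diagonal, Matrix.diagonal_mul, hA, hM]
  split_ifs with hTS
  · rw [mul_one, ← card_compl_subset_Cset_subset_Dset_mul_eta hTS, Nat.cast_mul,
      mul_inv_cancel_right₀ (Nat.cast_ne_zero.2 (eta_pos Tᶜ).ne')]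
  · obtain ⟨i, hiT, hiS⟩ := not_subset.1 hTS
    rw [filter_false_of_mem fun w _ hw =>
      disjoint_left.1 (disjoint_Cset_Dset w) (hw.1 (mem_compl.2 hiS)) (hw.2 hiT)]
    simp
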